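/- Let R be a commutative semihyperring with a multiplicative identity 1. Then the following are equivalent: (1) R is multiplicatively regular, i.e., for every a ∈ R there exists b ∈ R with a = a·b·a; (2) every hyperideal I of R is idempotent, i.e., I = II; (3) I ∩ J = IJ for all hyperideals I and J of R; (4) every hyperideal of R is semiprime. -/

import Mathlib

/-- A semihyperring `(R, +, ·, 0)`: `+` is a hyperoperation (into nonempty sets),
`·` is an associative single-valued multiplication distributing over `+`,
and `0` is an additive identity and multiplicative absorbing element. -/
class Semihyperring (R : Type*) extends Mul R, Zero R where
  /-- hyperaddition -/
  hadd : R → R → Set R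
  hadd_nonempty : ∀ a b : R, (hadd a b).Nonempty
  hadd_comm : ∀ a b : R, hadd a b = hadd b a
  hadd_assoc : ∀ a b c : R, (⋃ x ∈ hadd a b, hadd x c) = ⋃ x ∈ hadd b c, hadd a x
  hadd_zero : ∀ a : R, hadd a 0 = {a}
  mul_assoc' : ∀ a b c : R, a * b * c = a * (b * c)
  left_distrib' : ∀ a b c : R, (fun x => a * x) '' hadd b c = hadd (a * b) (a * c)
  right_distrib' : ∀ a b c : R, (fun x => x * c) '' hadd a b = hadd (a * c) (b * c)
  mul_zero' : ∀ a : R, a * 0 = 0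
  zero_mul' : ∀ a : R, 0 * a = 0

namespace Semihyperring

variable {R : Type*} [Semihyperring R]

/-- Hyperaddition extended to sets: `A + B = ⋃_{a∈A, b∈B} (a + b)`. -/
def hAddSet (A B : Set R) : Set R := ⋃ a ∈ A, ⋃ b ∈ B, hadd a b

/-- The hypersum `x₁ + x₂ + ⋯ + xₙ` of a list of elements (as a set);
the empty hypersum is `{0}`, so `hSum [x] = {x}`. -/
def hSum : List R → Set R
  | [] => {0}
  | x :: xs => hAddSet {x} (hSum xs)

/-- A left hyperideal. -/
def IsLeftHyperideal (I : Set R) : Prop :=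
  I.Nonempty ∧ (∀ a ∈ I, ∀ b ∈ I, hadd a b ⊆ I) ∧ ∀ a ∈ I, ∀ r : R, r * a ∈ I

/-- A right hyperideal. -/
def IsRightHyperideal (I : Set R) : Prop :=
  I.Nonempty ∧ (∀ a ∈ I, ∀ b ∈ I, hadd a b ⊆ I) ∧ ∀ a ∈ I, ∀ r : R, a * r ∈ I

/-- A (two-sided) hyperideal. -/
def IsHyperideal (I : Set R) : Prop :=
  I.Nonempty ∧ (∀ a ∈ I, ∀ b ∈ I, hadd a b ⊆ I) ∧ ∀ a ∈ I, ∀ r : R, r * a ∈ I ∧ a * r ∈ I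

/-- The product `HK`: union of all finite hypersums `a₁·b₁ + ⋯ + aₙ·bₙ` (n ≥ 1)
with `aᵢ ∈ H`, `bᵢ ∈ K`. -/
def hProd (H K : Set R) : Set R :=
  ⋃ (l : List (R × R)) (_ : l ≠ []) (_ : ∀ p ∈ l, p.1 ∈ H ∧ p.2 ∈ K),
    hSum (l.map fun p => p.1 * p.2)

/-- The hyperideal generated by an element. -/
def genHyperideal (a : R) : Set R := ⋂₀ {I : Set R | IsHyperideal I ∧ a ∈ I}

/-- A prime hyperideal. -/
def IsPrimeHyperideal (P : Set R) : Prop :=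
  IsHyperideal P ∧
    ∀ A B : Set R, IsHyperideal A → IsHyperideal B → hProd A B ⊆ P → A ⊆ P ∨ B ⊆ P

/-- A semiprime hyperideal. -/
def IsSemiprimeHyperideal (I : Set R) : Prop :=
  IsHyperideal I ∧ ∀ H : Set R, IsHyperideal H → hProd H H ⊆ I → H ⊆ I

/-- A strongly irreducible hyperideal. -/
def IsStronglyIrreducibleHyperideal (I : Set R) : Prop :=
  IsHyperideal I ∧
    ∀ H K : Set R, IsHyperideal H → IsHyperideal K → H ∩ K ⊆ I → H ⊆ I ∨ K ⊆ I

/-- An irreducible hyperideal. -/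
def IsIrreducibleHyperideal (I : Set R) : Prop :=
  IsHyperideal I ∧
    ∀ H K : Set R, IsHyperideal H → IsHyperideal K → I = H ∩ K → I = H ∨ I = K

/-- `a·R`: the union of all finite hypersums `a·r₁ + ⋯ + a·rₙ` (n ≥ 1) with `rᵢ ∈ R`. -/
def rightMulSet (a : R) : Set R :=
  ⋃ (l : List R) (_ : l ≠ []), hSum (l.map fun r => a * r)

end Semihyperring


/-!
`I J ⊆ I ∩ J` always holds, and regularity `x = x b x = (x b) · x` puts every `x ∈ I ∩ J`
into `I J`. Conversely, by commutativity each set `c R = {c r}` is a hyperideal and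
`(a R)(a R) ⊆ a² R`; semiprimeness of `a² R` then gives `a ∈ a R ⊆ a² R`, i.e.
`a = a a b = a b a` for some `b`.
-/

namespace Semihyperring

variable {R : Type*} [Semihyperring R]

lemma mem_hAddSet {A B : Set R} {z : R} :
    z ∈ hAddSet A B ↔ ∃ a ∈ A, ∃ b ∈ B, z ∈ hadd a b := by
  simp [hAddSet]

lemma hSum_singleton (x : R) : hSum [x] = {x} := by
  ext z
  simp [hSum, mem_hAddSet, hadd_zero]

lemma mem_hProd {H K : Set R} {z : R} :
    z ∈ hProd H K ↔ ∃ l : List (R × R), l ≠ [] ∧ (∀ p ∈ l, p.1 ∈ H ∧ p.2 ∈ K) ∧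
      z ∈ hSum (l.map fun p => p.1 * p.2) := by
  simp only [hProd, Set.mem_iUnion, exists_prop]

lemma mul_mem_hProd {H K : Set R} {a b : R} (ha : a ∈ H) (hb : b ∈ K) :
    a * b ∈ hProd H K :=
  mem_hProd.2 ⟨[(a, b)], List.cons_ne_nil _ _, by simp [ha, hb], by simp [hSum_singleton]⟩

namespace IsHyperideal

variable {I J : Set R}

lemma mul_mem_left (hI : IsHyperideal I) (r : R) {a : R} (ha : a ∈ I) : r * a ∈ I :=
  (hI.2.2 a ha r).1

lemma mul_mem_right (hI : IsHyperideal I) (r : R) {a : R} (ha : a ∈ I) : a * r ∈ I :=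
  (hI.2.2 a ha r).2

lemma zero_mem (hI : IsHyperideal I) : (0 : R) ∈ I := by
  obtain ⟨x, hx⟩ := hI.1
  simpa only [zero_mul'] using hI.mul_mem_left 0 hx

lemma hSum_subset (hI : IsHyperideal I) {L : List R} (hL : ∀ x ∈ L, x ∈ I) : hSum L ⊆ I := by
  induction L with
  | nil => simpa [hSum] using hI.zero_mem
  | cons x xs ih =>
    intro z hz
    obtain ⟨_, rfl, b, hb, hz⟩ := mem_hAddSet.1 hz
    exact hI.2.1 _ (hL _ List.mem_cons_self) b
      (ih (fun y hy => hL y (List.mem_cons_of_mem _ hy)) hb) hz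

lemma hProd_subset {H K : Set R} (hI : IsHyperideal I)
    (h : ∀ a ∈ H, ∀ b ∈ K, a * b ∈ I) : hProd H K ⊆ I := by
  intro z hz
  obtain ⟨l, -, hl, hz⟩ := mem_hProd.1 hz
  refine hI.hSum_subset (fun x hx => ?_) hz
  obtain ⟨p, hp, rfl⟩ := List.mem_map.1 hx
  exact h p.1 (hl p hp).1 p.2 (hl p hp).2

lemma inter (hI : IsHyperideal I) (hJ : IsHyperideal J) : IsHyperideal (I ∩ J) :=
  ⟨⟨0, hI.zero_mem, hJ.zero_mem⟩,
    fun a ha b hb => Set.subset_inter (hI.2.1 a ha.1 b hb.1) (hJ.2.1 a ha.2 b hb.2),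
    fun _ ha r => ⟨⟨hI.mul_mem_left r ha.1, hJ.mul_mem_left r ha.2⟩,
      ⟨hI.mul_mem_right r ha.1, hJ.mul_mem_right r ha.2⟩⟩⟩

lemma hProd_subset_inter (hI : IsHyperideal I) (hJ : IsHyperideal J) : hProd I J ⊆ I ∩ J :=
  (hI.inter hJ).hProd_subset fun _ ha _ hb => ⟨hI.mul_mem_right _ ha, hJ.mul_mem_left _ hb⟩

end IsHyperideal

lemma isHyperideal_range_mul (hcomm : ∀ x y : R, x * y = y * x) (c : R) :
    IsHyperideal (Set.range (c * ·)) := by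
  refine ⟨⟨c * 0, 0, rfl⟩, ?_, ?_⟩
  · rintro _ ⟨u, rfl⟩ _ ⟨v, rfl⟩
    rw [← left_distrib']
    exact Set.image_subset_range _ _
  · rintro _ ⟨u, rfl⟩ r
    have hmem : c * u * r ∈ Set.range (c * ·) := ⟨u * r, (mul_assoc' c u r).symm⟩
    exact ⟨hcomm r _ ▸ hmem, hmem⟩

lemma inter_subset_hProd_of_regular (hreg : ∀ a : R, ∃ b : R, a = a * b * a)
    {I J : Set R} (hI : IsHyperideal I) : I ∩ J ⊆ hProd I J := by
  rintro x ⟨hxI, hxJ⟩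
  obtain ⟨b, hb⟩ := hreg x
  rw [hb]
  exact mul_mem_hProd (hI.mul_mem_right b hxI) hxJ

lemma hProd_range_mul_self_subset (hcomm : ∀ x y : R, x * y = y * x) (a : R) :
    hProd (Set.range (a * ·)) (Set.range (a * ·)) ⊆ Set.range (a * a * ·) := by
  refine (isHyperideal_range_mul hcomm (a * a)).hProd_subset ?_
  rintro _ ⟨u, rfl⟩ _ ⟨v, rfl⟩
  refine ⟨u * v, ?_⟩
  simp only [mul_assoc', ← mul_assoc' u a v, hcomm u a]

end Semihyperring

open Semihyperring

/-- characterizations of multiplicatively regular commutative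
semihyperrings with identity. -/
theorem regular_tfae {R : Type*} [Semihyperring R]
    (one : R) (hone : ∀ x : R, one * x = x ∧ x * one = x)
    (hcomm : ∀ x y : R, x * y = y * x) :
    List.TFAE [
      ∀ a : R, ∃ b : R, a = a * b * a,
      ∀ I : Set R, IsHyperideal I → I = hProd I I,
      ∀ I J : Set R, IsHyperideal I → IsHyperideal J → I ∩ J = hProd I J,
      ∀ I : Set R, IsHyperideal I → IsSemiprimeHyperideal I ] := by
  tfae_have 1 → 3 := fun hreg I J hI hJ =>
    (inter_subset_hProd_of_regular hreg hI).antisymm (hI.hProd_subset_inter hJ)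
  tfae_have 3 → 2 := fun h3 I hI => by rw [← h3 I I hI hI, Set.inter_self]
  tfae_have 2 → 4 := fun h2 I hI => ⟨hI, fun H hH hHH => h2 H hH ▸ hHH⟩
  tfae_have 4 → 1 := by
    intro h4 a
    have ha : a ∈ Set.range (a * ·) := ⟨one, (hone a).2⟩
    obtain ⟨b, hb⟩ := (h4 _ (isHyperideal_range_mul hcomm (a * a))).2 _
      (isHyperideal_range_mul hcomm a) (hProd_range_mul_self_subset hcomm a) ha
    refine ⟨b, ?_⟩
    calc a = a * a * b := hb.symm
      _ = a * (b * a) := by rw [mul_assoc', hcomm a b]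
      _ = a * b * a := (mul_assoc' a b a).symm
  tfae_finish
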